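/- Let A be an arrangement of l affine hyperplanes in R^m, and let B be an arrangement consisting of d parallel translates of each hyperplane of A (so |B| = d·l). Then B partitions R^m into at most r_p(m,l,d) = ∑_{i=0}^{m} C(l,i) d^i connected regions. -/

import Mathlib

/-!
A region of the arrangement is exactly the set of points with a given sign vector (the side of
each hyperplane they lie on): the sign vector is constant on connected subsets of the complement
by the intermediate value theorem, and its fibres are convex. So it suffices to count realized
sign vectors, which we do by induction on the number `l` of directions, in any finite-dimensional
space over an ordered field. The `d` translates `φ = c_k` of a new direction cut a region `R` of
the old arrangement into at most `1 + #{k | c_k ∈ φ(R)}` pieces, because `φ(R)` is an interval.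
The regions meeting the hyperplane `φ = c_k` are regions of the arrangement restricted to it,
which lives in dimension one less. Hence `r(n, l + 1, d) ≤ r(n, l, d) + d · r(n - 1, l, d)`,
which is Pascal's rule for `r`.
-/

open Finset Module

def regionBound (m l d : ℕ) : ℕ := ∑ i ∈ range (m + 1), l.choose i * d ^ i

lemma regionBound_zero_middle (m d : ℕ) : regionBound m 0 d = 1 := by
  simp [regionBound, Finset.sum_range_succ', Nat.choose_zero_succ]

lemma regionBound_le_succ_middle (m l d : ℕ) : regionBound m l d ≤ regionBound m (l + 1) d := by
  unfold regionBound
  gcongr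
  exact Nat.le_succ l

lemma regionBound_succ_succ (n l d : ℕ) :
    regionBound (n + 1) (l + 1) d = regionBound (n + 1) l d + d * regionBound n l d := by
  simp only [regionBound, sum_range_succ' _ (n + 1), mul_sum, Nat.choose_succ_succ, add_mul,
    sum_add_distrib, Nat.choose_zero_right, Nat.succ_eq_add_one]
  rw [sum_congr rfl fun i _ => (by ring : l.choose i * d ^ (i + 1) = d * (l.choose i * d ^ i))]
  ring

section Order

variable {α : Type*} [LinearOrder α] {d : ℕ}

def sidePattern (c : Fin d → α) (t : α) : Fin d → Bool := fun k => decide (c k < t)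

lemma decide_lt_eq_of_ordConnected {T : Set α} (hT : T.OrdConnected) {c t₁ t₂ : α}
    (hc : c ∉ T) (h₁ : t₁ ∈ T) (h₂ : t₂ ∈ T) : decide (c < t₁) = decide (c < t₂) := by
  wlog h : t₁ ≤ t₂ generalizing t₁ t₂
  · exact (this h₂ h₁ (le_of_not_ge h)).symm
  obtain hlt | hgt : c < t₁ ∨ t₂ < c := by
    by_contra! hle
    exact hc (hT.out h₁ h₂ hle)
  · simp [hlt, hlt.trans_le h]
  · simp [not_lt.2 hgt.le, not_lt.2 (h.trans hgt.le)]

lemma ncard_image_sidePattern_le (c : Fin d → α) {T : Set α} (hT : T.OrdConnected) :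
    (sidePattern c '' T).ncard ≤ {k | c k ∈ T}.ncard + 1 := by
  classical
  set K := {k | c k ∈ T}.toFinset
  -- the pattern of `t ∈ T` is determined by the number of thresholds in `T` below `t`
  let count : (Fin d → Bool) → ℕ := fun τ => #{k ∈ K | τ k}
  have hinj : Set.InjOn count (sidePattern c '' T) := by
    rintro _ ⟨t₁, h₁, rfl⟩ _ ⟨t₂, h₂, rfl⟩ hcount
    wlog h : t₁ ≤ t₂ generalizing t₁ t₂
    · exact (this t₂ h₂ t₁ h₁ hcount.symm (le_of_not_ge h)).symm
    have hsub : {k ∈ K | sidePattern c t₁ k} ⊆ {k ∈ K | sidePattern c t₂ k} := by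
      intro k
      simp only [mem_filter, sidePattern, decide_eq_true_eq]
      exact fun ⟨hk, hlt⟩ => ⟨hk, hlt.trans_le h⟩
    have heq := eq_of_subset_of_card_le hsub hcount.ge
    funext k
    by_cases hk : c k ∈ T
    · simpa [K, hk, sidePattern] using congrArg (k ∈ ·) heq
    · exact decide_lt_eq_of_ordConnected hT hk h₁ h₂
  calc (sidePattern c '' T).ncard ≤ (range (K.card + 1) : Set ℕ).ncard := by
        refine Set.ncard_le_ncard_of_injOn count ?_ hinj
        rintro _ ⟨t, -, rfl⟩
        simpa [Nat.lt_succ_iff] using card_filter_le K _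
    _ = {k | c k ∈ T}.ncard + 1 := by simp [K, Set.ncard_eq_toFinset_card']

end Order

lemma Finset.sum_ncard_setOf_eq_sum_card_filter {α β : Type*} [Fintype β] (s : Finset α)
    (p : α → β → Prop) [∀ a b, Decidable (p a b)] :
    ∑ a ∈ s, {b | p a b}.ncard = ∑ b, #{a ∈ s | p a b} := by
  simp only [Set.ncard_eq_toFinset_card', Set.toFinset_ofPred, card_filter]
  exact sum_comm

section Arrangement

variable {𝕜 E ι : Type*} [Field 𝕜] [AddCommGroup E] [Module 𝕜 E] {d : ℕ}

def arrangementCompl (f : ι → E →ₗ[𝕜] 𝕜) (b : ι → Fin d → 𝕜) : Set E :=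
  {x | ∀ j k, f j x ≠ b j k}

lemma mem_arrangementCompl_restrict (f : ι → E →ₗ[𝕜] 𝕜) (b : ι → Fin d → 𝕜) (W : Submodule 𝕜 E)
    (x₀ : E) (y : W) :
    y ∈ arrangementCompl (fun j => (f j).comp W.subtype) (fun j k => b j k - f j x₀) ↔
      x₀ + y ∈ arrangementCompl f b := by
  simp [arrangementCompl, eq_sub_iff_add_eq']

variable [LinearOrder 𝕜]

def signVector (f : ι → E →ₗ[𝕜] 𝕜) (b : ι → Fin d → 𝕜) (x : E) : ι → Fin d → Bool :=
  fun j => sidePattern (b j) (f j x)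

def signRegion (f : ι → E →ₗ[𝕜] 𝕜) (b : ι → Fin d → 𝕜) (σ : ι → Fin d → Bool) : Set E :=
  {x ∈ arrangementCompl f b | signVector f b x = σ}

lemma signRegion_eq_iInter (f : ι → E →ₗ[𝕜] 𝕜) (b : ι → Fin d → 𝕜) (σ : ι → Fin d → Bool) :
    signRegion f b σ =
      ⋂ j, ⋂ k, f j ⁻¹' (if σ j k then Set.Ioi (b j k) else Set.Iio (b j k)) := by
  ext x
  simp only [signRegion, arrangementCompl, signVector, sidePattern, Set.mem_ofPred_eq,
    Set.mem_iInter, Set.mem_preimage, funext_iff, ← forall_and]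
  refine forall₂_congr fun j k => ?_
  cases σ j k
  · simp only [decide_eq_false_iff_not, not_lt, Bool.false_eq_true, if_false, Set.mem_Iio]
    exact ⟨fun ⟨hne, hle⟩ => hle.lt_of_ne hne, fun hlt => ⟨hlt.ne, hlt.le⟩⟩
  · simp only [decide_eq_true_eq, if_true, Set.mem_Ioi]
    exact ⟨And.right, fun hlt => ⟨hlt.ne', hlt⟩⟩

lemma convex_signRegion [IsStrictOrderedRing 𝕜] (f : ι → E →ₗ[𝕜] 𝕜) (b : ι → Fin d → 𝕜)
    (σ : ι → Fin d → Bool) :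
    Convex 𝕜 (signRegion f b σ) := by
  rw [signRegion_eq_iInter]
  refine convex_iInter fun j => convex_iInter fun k => ?_
  split_ifs
  exacts [(convex_Ioi _).linear_preimage (f j), (convex_Iio _).linear_preimage (f j)]


lemma signVector_restrict [IsStrictOrderedRing 𝕜] (f : ι → E →ₗ[𝕜] 𝕜) (b : ι → Fin d → 𝕜)
    (W : Submodule 𝕜 E) (x₀ : E) (y : W) :
    signVector (fun j => (f j).comp W.subtype) (fun j k => b j k - f j x₀) y =
      signVector f b (x₀ + y) := by
  ext j k
  simp only [signVector, sidePattern, LinearMap.comp_apply, Submodule.subtype_apply, map_add,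
    sub_lt_iff_lt_add']

lemma exists_setOf_mem_image_signRegion_subset [IsStrictOrderedRing 𝕜] (f : ι → E →ₗ[𝕜] 𝕜)
    (b : ι → Fin d → 𝕜) {φ : E →ₗ[𝕜] 𝕜} (hφ : φ ≠ 0) (c : 𝕜) :
    ∃ b' : ι → Fin d → 𝕜, {σ | c ∈ φ '' signRegion f b σ} ⊆
      signVector (fun j => (f j).comp (LinearMap.ker φ).subtype) b' ''
        arrangementCompl (fun j => (f j).comp (LinearMap.ker φ).subtype) b' := by
  obtain ⟨x₀, hx₀⟩ := LinearMap.range_eq_top.mp (Module.Dual.range_eq_top_of_ne_zero hφ) c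
  refine ⟨fun j k => b j k - f j x₀, ?_⟩
  rintro σ ⟨x, ⟨hx, rfl⟩, hφx⟩
  have hy : x - x₀ ∈ LinearMap.ker φ := by simp [hx₀, hφx]
  refine ⟨⟨x - x₀, hy⟩, ?_, ?_⟩
  · simpa [mem_arrangementCompl_restrict] using hx
  · simp [signVector_restrict]

section Deletion

variable {l : ℕ} (f : Fin (l + 1) → E →ₗ[𝕜] 𝕜) (b : Fin (l + 1) → Fin d → 𝕜)

lemma ncard_image_signVector_le_sum :
    (signVector f b '' arrangementCompl f b).ncard ≤
      ∑ σ' ∈ (signVector (Fin.tail f) (Fin.tail b) ''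
          arrangementCompl (Fin.tail f) (Fin.tail b)).toFinite.toFinset,
        (sidePattern (b 0) '' (f 0 '' signRegion (Fin.tail f) (Fin.tail b) σ')).ncard := by
  set S' := signVector (Fin.tail f) (Fin.tail b) '' arrangementCompl (Fin.tail f) (Fin.tail b)
  set P := fun σ' => sidePattern (b 0) '' (f 0 '' signRegion (Fin.tail f) (Fin.tail b) σ')
  set cons := fun σ' τ => (Fin.cons τ σ' : Fin (l + 1) → Fin d → Bool)
  have hsub : signVector f b '' arrangementCompl f b ⊆
      ⋃ σ' ∈ S'.toFinite.toFinset, cons σ' '' P σ' := by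
    rintro _ ⟨x, hx, rfl⟩
    have hx' : x ∈ arrangementCompl (Fin.tail f) (Fin.tail b) := fun j k => hx j.succ k
    simp only [Set.mem_iUnion, Set.Finite.mem_toFinset]
    exact ⟨_, ⟨x, hx', rfl⟩, _, ⟨_, ⟨x, ⟨hx', rfl⟩, rfl⟩, rfl⟩,
      Fin.cons_self_tail (signVector f b x)⟩
  calc _ ≤ (⋃ σ' ∈ S'.toFinite.toFinset, cons σ' '' P σ').ncard :=
        Set.ncard_le_ncard hsub (Set.toFinite _)
    _ ≤ ∑ σ' ∈ S'.toFinite.toFinset, (cons σ' '' P σ').ncard := set_ncard_biUnion_le _ _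
    _ = ∑ σ' ∈ S'.toFinite.toFinset, (P σ').ncard :=
        sum_congr rfl fun σ' _ => Set.ncard_image_of_injective _
          (Fin.cons_left_injective (α := fun _ => Fin d → Bool) σ')

lemma ncard_image_signVector_le_of_eq_zero (hf : f 0 = 0) :
    (signVector f b '' arrangementCompl f b).ncard ≤
      (signVector (Fin.tail f) (Fin.tail b) ''
        arrangementCompl (Fin.tail f) (Fin.tail b)).ncard := by
  refine (ncard_image_signVector_le_sum f b).trans ?_
  rw [Set.ncard_eq_toFinset_card _ (Set.toFinite _), card_eq_sum_ones]
  refine sum_le_sum fun σ' _ => Set.ncard_le_one_iff_subsingleton.2 (Set.Subsingleton.image ?_ _)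
  refine (Set.subsingleton_singleton (a := (0 : 𝕜))).anti ?_
  rintro _ ⟨x, -, rfl⟩
  simp [hf]

lemma ncard_image_signVector_le_add_sum [IsStrictOrderedRing 𝕜] :
    (signVector f b '' arrangementCompl f b).ncard ≤
      (signVector (Fin.tail f) (Fin.tail b) '' arrangementCompl (Fin.tail f) (Fin.tail b)).ncard +
        ∑ k, {σ' | b 0 k ∈ f 0 '' signRegion (Fin.tail f) (Fin.tail b) σ'}.ncard := by
  classical
  set S' := signVector (Fin.tail f) (Fin.tail b) '' arrangementCompl (Fin.tail f) (Fin.tail b)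
  set T := fun σ' => f 0 '' signRegion (Fin.tail f) (Fin.tail b) σ'
  calc _ ≤ ∑ σ' ∈ S'.toFinite.toFinset, ({k | b 0 k ∈ T σ'}.ncard + 1) :=
        (ncard_image_signVector_le_sum f b).trans <| sum_le_sum fun σ' _ =>
          ncard_image_sidePattern_le _ ((convex_signRegion _ _ σ').linear_image (f 0)).ordConnected
    _ = S'.ncard + ∑ k, #{σ' ∈ S'.toFinite.toFinset | b 0 k ∈ T σ'} := by
        rw [sum_add_distrib, sum_ncard_setOf_eq_sum_card_filter, Set.ncard_eq_toFinset_card S',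
          card_eq_sum_ones, add_comm]
    _ ≤ S'.ncard + ∑ k, {σ' | b 0 k ∈ T σ'}.ncard := by
        gcongr with k
        rw [← Set.ncard_coe_finset, coe_filter]
        exact Set.ncard_le_ncard fun σ' h => h.2

end Deletion

theorem ncard_image_signVector_le [IsStrictOrderedRing 𝕜] [FiniteDimensional 𝕜 E] {l : ℕ}
    (f : Fin l → E →ₗ[𝕜] 𝕜) (b : Fin l → Fin d → 𝕜) :
    (signVector f b '' arrangementCompl f b).ncard ≤ regionBound (finrank 𝕜 E) l d := by
  induction l generalizing E with
  | zero =>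
    rw [regionBound_zero_middle]
    exact Set.ncard_le_one_of_subsingleton _
  | succ l ih =>
    by_cases hφ : f 0 = 0
    · exact (ncard_image_signVector_le_of_eq_zero f b hφ).trans
        ((ih _ _).trans (regionBound_le_succ_middle _ _ _))
    have hker := Module.Dual.finrank_ker_add_one_of_ne_zero hφ
    obtain ⟨n, hn⟩ : ∃ n, finrank 𝕜 E = n + 1 := ⟨_, hker.symm⟩
    have hrestr : ∀ k, {σ' | b 0 k ∈ f 0 '' signRegion (Fin.tail f) (Fin.tail b) σ'}.ncard ≤
        regionBound n l d := fun k => by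
      obtain ⟨b', hb'⟩ :=
        exists_setOf_mem_image_signRegion_subset (Fin.tail f) (Fin.tail b) hφ (b 0 k)
      refine (Set.ncard_le_ncard hb').trans ?_
      have hn' : finrank 𝕜 (LinearMap.ker (f 0)) = n := by omega
      simpa [hn'] using ih (E := LinearMap.ker (f 0)) _ b'
    calc _ ≤ _ := ncard_image_signVector_le_add_sum f b
      _ ≤ regionBound (n + 1) l d + ∑ _k : Fin d, regionBound n l d :=
          add_le_add (hn ▸ ih _ _) (sum_le_sum fun k _ => hrestr k)
      _ = _ := by simp [hn, regionBound_succ_succ]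

end Arrangement

section Topology

variable {E ι : Type*} [AddCommGroup E] [Module ℝ E] [TopologicalSpace E] {d : ℕ}
  {f : ι → E →ₗ[ℝ] ℝ} {b : ι → Fin d → ℝ}

lemma signVector_eq_of_mem_connectedComponentIn (hf : ∀ j, Continuous (f j)) {x y : E}
    (hy : y ∈ connectedComponentIn (arrangementCompl f b) x) :
    signVector f b y = signVector f b x := by
  have hx : x ∈ connectedComponentIn (arrangementCompl f b) x :=
    mem_connectedComponentIn (connectedComponentIn_nonempty_iff.mp ⟨y, hy⟩)
  funext j k
  refine decide_lt_eq_of_ordConnected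
    (isPreconnected_connectedComponentIn.image _ (hf j).continuousOn).ordConnected ?_
    ⟨y, hy, rfl⟩ ⟨x, hx, rfl⟩
  rintro ⟨z, hz, hzb⟩
  exact connectedComponentIn_subset _ _ hz j k hzb

lemma connectedComponentIn_arrangementCompl [ContinuousAdd E] [ContinuousSMul ℝ E]
    (hf : ∀ j, Continuous (f j)) {x : E} (hx : x ∈ arrangementCompl f b) :
    connectedComponentIn (arrangementCompl f b) x = signRegion f b (signVector f b x) :=
  subset_antisymm
    (fun _ hy => ⟨connectedComponentIn_subset _ _ hy,
      signVector_eq_of_mem_connectedComponentIn hf hy⟩)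
    ((convex_signRegion f b _).isPreconnected.subset_connectedComponentIn ⟨hx, rfl⟩
      fun _ hy => hy.1)

theorem ncard_connectedComponentIn_arrangementCompl_le [ContinuousAdd E] [ContinuousSMul ℝ E]
    [FiniteDimensional ℝ E] {l : ℕ} (f : Fin l → E →ₗ[ℝ] ℝ) (hf : ∀ j, Continuous (f j))
    (b : Fin l → Fin d → ℝ) :
    {C | ∃ x ∈ arrangementCompl f b, C = connectedComponentIn (arrangementCompl f b) x}.ncard ≤
      regionBound (finrank ℝ E) l d :=
  calc _ ≤ (signRegion f b '' (signVector f b '' arrangementCompl f b)).ncard := by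
        refine Set.ncard_le_ncard ?_ ((Set.toFinite _).image _)
        rintro _ ⟨x, hx, rfl⟩
        exact ⟨_, ⟨x, hx, rfl⟩, (connectedComponentIn_arrangementCompl hf hx).symm⟩
    _ ≤ (signVector f b '' arrangementCompl f b).ncard := Set.ncard_image_le (Set.toFinite _)
    _ ≤ _ := ncard_image_signVector_le f b

end Topology

theorem parallel_arrangement_region_bound_general (m l d : ℕ)
    (a : Fin l → Fin m → ℝ) (b : Fin l → Fin d → ℝ) :
    {C : Set (Fin m → ℝ) |
        ∃ x ∈ {x : Fin m → ℝ | ∀ j k, ∑ i, a j i * x i ≠ b j k},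
          C = connectedComponentIn {x : Fin m → ℝ | ∀ j k, ∑ i, a j i * x i ≠ b j k} x}.ncard
      ≤ ∑ i ∈ Finset.range (m + 1), l.choose i * d ^ i := by
  have h := ncard_connectedComponentIn_arrangementCompl_le (fun j => dotProductBilin ℝ ℝ (a j))
    (fun _ => LinearMap.continuous_of_finiteDimensional _) b
  rwa [Module.finrank_fin_fun] at h

/-- An arrangement `B` of `d` parallel translates of each of `l` hyperplanes in `ℝ^m`
(`|B| = d·l`) partitions `ℝ^m` into at most `∑_{i=0}^{m} C(l,i) d^i` connected regions.
Hyperplane `(j,k)` is `{x : aⱼᵀ x = b j k}`. -/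
theorem parallel_arrangement_region_bound (m l d : ℕ)
    (a : Fin l → Fin m → ℝ) (b : Fin l → Fin d → ℝ) (ha : ∀ j, a j ≠ 0) :
    {C : Set (Fin m → ℝ) |
        ∃ x ∈ {x : Fin m → ℝ | ∀ j k, ∑ i, a j i * x i ≠ b j k},
          C = connectedComponentIn {x : Fin m → ℝ | ∀ j k, ∑ i, a j i * x i ≠ b j k} x}.ncard
      ≤ ∑ i ∈ Finset.range (m + 1), l.choose i * d ^ i :=
  parallel_arrangement_region_bound_general m l d a b
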